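/- There exist constants c₁, c₂ with 0 < c₁ ≤ c₂ such that c₁ ≤ |(σ(S) − σ(T))/(S − T)| ≤ c₂ for all S, T on the unit circle Γ with S ≠ T. -/

import Mathlib

open Complex Metric Set MeasureTheory Filter Topology

/-- A conformal mapping of the open unit disk onto a bounded simply connected domain `Dz ⊂ ℂ`,
extending to a homeomorphism of the closed disk onto the closure of `Dz`, with a nonvanishing
continuous contour derivative `σ'` on the unit circle `Γ`. -/
structure ConformalMap where
  /-- the conformal mapping -/
  σ : ℂ → ℂ
  /-- its contour derivative on the unit circle -/
  σ' : ℂ → ℂ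
  /-- the image domain -/
  Dz : Set ℂ
  isOpen_Dz : IsOpen Dz
  bounded_Dz : Bornology.IsBounded Dz
  holo : DifferentiableOn ℂ σ (ball 0 1)
  injOn : InjOn σ (closedBall 0 1)
  contOn : ContinuousOn σ (closedBall 0 1)
  image_ball : σ '' ball 0 1 = Dz
  image_closedBall : σ '' closedBall 0 1 = closure Dz
  cont_deriv : ContinuousOn σ' (sphere 0 1)
  deriv_ne_zero : ∀ T ∈ sphere (0 : ℂ) 1, σ' T ≠ 0
  hasDeriv : ∀ θ : ℝ, HasDerivAt (fun t : ℝ => σ (Complex.exp (Complex.I * t)))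
    (Complex.I * Complex.exp (Complex.I * θ) * σ' (Complex.exp (Complex.I * θ))) θ

/-- The modulus of continuity `ω_Γ(f, ε)` of a function on the unit circle. -/
noncomputable def omegaΓ (f : ℂ → ℂ) (ε : ℝ) : ℝ :=
  sSup {r : ℝ | ∃ T₁ ∈ sphere (0 : ℂ) 1, ∃ T₂ ∈ sphere (0 : ℂ) 1,
    ‖T₁ - T₂‖ ≤ ε ∧ r = ‖f T₁ - f T₂‖}

namespace ConformalMap

variable (C : ConformalMap)

/-- `τ(t) = σ((t−i)/(t+i))`, the composition with the conformal map of the upper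
half-plane onto the unit disk. -/
noncomputable def τ (t : ℝ) : ℂ := C.σ (((t : ℂ) - Complex.I) / ((t : ℂ) + Complex.I))

/-- `τ'(s) = (2i/(s+i)²)·σ'((s−i)/(s+i))`. -/
noncomputable def τ' (s : ℝ) : ℂ :=
  (2 * Complex.I / ((s : ℂ) + Complex.I) ^ 2) * C.σ' (((s : ℂ) - Complex.I) / ((s : ℂ) + Complex.I))

/-- The kernel `k₁(t,s)`. -/
noncomputable def k₁ (t s : ℝ) : ℂ :=
  C.τ' s / (C.τ s - C.τ t) - (((1 + s * t) / ((s - t) * (s ^ 2 + 1)) : ℝ) : ℂ)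

/-- The kernel `k₂(t,s)`. -/
noncomputable def k₂ (t s : ℝ) : ℂ :=
  C.τ' s * ((((C.τ s).im - (C.τ t).im : ℝ)) : ℂ) / (2 * (C.τ s - C.τ t) ^ 2)
    - (((C.τ' s).im : ℂ)) / (2 * (C.τ s - C.τ t))

/-- The Dini condition `∫₀¹ ω_Γ(σ', η)/η dη < ∞`. -/
def DiniCondition : Prop :=
  IntervalIntegrable (fun η => omegaΓ C.σ' η / η) volume 0 1

/-- The logarithmic Dini condition `∫₀² (ω_Γ(σ', η)/η)·ln(3/η) dη < ∞`. -/
def LogDiniCondition : Prop :=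
  IntervalIntegrable (fun η => omegaΓ C.σ' η / η * Real.log (3 / η)) volume 0 2

end ConformalMap

/-- The sup norm of a function on the real line. -/
noncomputable def supNorm (g : ℝ → ℂ) : ℝ := ⨆ t : ℝ, ‖g t‖

/-- Membership in `C(ℝ̄)`: continuity on `ℝ` together with a finite limit at infinity. -/
def MemCRbar (g : ℝ → ℂ) (L : ℂ) : Prop :=
  Continuous g ∧ Tendsto g (cocompact ℝ) (𝓝 L)

/-! The difference quotient of `σ` on `Γ × Γ`, completed on the diagonal by `σ'`, is continuous.
Near a diagonal point `(T₀, T₀)` this is the mean value theorem along the arc from `T` to `S`: it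
bounds the deviation of the quotient from `σ'(T₀)` by the oscillation of `σ'` on that arc, times
the ratio `π / 2` between arc length and chord. The completed quotient never vanishes, since `σ`
is injective and `σ' ≠ 0`, so on the compact torus `Γ × Γ` its modulus attains a positive minimum
and a finite maximum. -/

open scoped Real

theorem norm_exp_I_mul_sub_exp_I_mul (s t : ℝ) :
    ‖exp (I * s) - exp (I * t)‖ = 2 * |Real.sin ((s - t) / 2)| := by
  have hfactor : exp (I * s) - exp (I * t) = exp (I * t) * (exp (I * ↑(s - t)) - 1) := by
    rw [mul_sub, ← Complex.exp_add]; push_cast; ring_nf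
  rw [hfactor, norm_mul, Complex.norm_exp_I_mul_ofReal, one_mul,
    Complex.norm_exp_I_mul_ofReal_sub_one, norm_mul, Real.norm_eq_abs, abs_two, Real.norm_eq_abs]

theorem abs_sub_le_norm_exp_I_mul_sub {s t : ℝ} (h : |s - t| ≤ π) :
    |s - t| ≤ π / 2 * ‖exp (I * s) - exp (I * t)‖ := by
  have habs : |(s - t) / 2| = |s - t| / 2 := by rw [abs_div, abs_two]
  have hsin := Real.mul_abs_le_abs_sin (x := (s - t) / 2) (by rw [habs]; linarith)
  rw [norm_exp_I_mul_sub_exp_I_mul, habs] at *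
  field_simp at hsin ⊢
  linarith

theorem exists_exp_I_mul_eq_abs_sub_le {T : ℂ} (hT : T ∈ sphere (0 : ℂ) 1) (t₀ : ℝ) :
    ∃ t : ℝ, exp (I * t) = T ∧ |t - t₀| ≤ π / 2 * ‖T - exp (I * t₀)‖ := by
  set z := T / exp (I * t₀)
  have hz : ‖z‖ = 1 := by
    rw [norm_div, Complex.norm_exp_I_mul_ofReal, div_one, ← sub_zero T, ← mem_sphere_iff_norm]
    exact hT
  have hexp : exp (I * (t₀ + z.arg : ℝ)) = T := by
    have hpolar := Complex.norm_mul_exp_arg_mul_I z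
    rw [hz, Complex.ofReal_one, one_mul] at hpolar
    rw [Complex.ofReal_add, mul_add, Complex.exp_add, mul_comm I (z.arg : ℂ), hpolar,
      mul_div_cancel₀ _ (Complex.exp_ne_zero _)]
  have hclose : |t₀ + z.arg - t₀| ≤ π := by simpa using Complex.abs_arg_le_pi z
  exact ⟨t₀ + z.arg, hexp, hexp ▸ abs_sub_le_norm_exp_I_mul_sub hclose⟩

theorem hasDerivAt_exp_I_mul (θ : ℝ) :
    HasDerivAt (fun t : ℝ => exp (I * t)) (I * exp (I * θ)) θ := by
  simpa [mul_comm] using (((hasDerivAt_id (θ : ℂ)).const_mul I).cexp).comp_ofReal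

section ContourDerivative

variable {φ φ' : ℂ → ℂ}

theorem norm_sub_sub_mul_le_of_forall_norm_le
    (hφ : ∀ θ : ℝ, HasDerivAt (fun t : ℝ => φ (exp (I * t)))
      (I * exp (I * θ) * φ' (exp (I * θ))) θ)
    {c : ℂ} {B s t : ℝ} (hB : ∀ u ∈ uIcc t s, ‖φ' (exp (I * u)) - c‖ ≤ B) :
    ‖φ (exp (I * s)) - φ (exp (I * t)) - c * (exp (I * s) - exp (I * t))‖ ≤ B * |s - t| := by
  have hderiv : ∀ u ∈ uIcc t s, HasDerivWithinAt (fun u : ℝ => φ (exp (I * u)) - c * exp (I * u))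
      (I * exp (I * u) * (φ' (exp (I * u)) - c)) (uIcc t s) u := fun u _ =>
    ((hφ u).sub ((hasDerivAt_exp_I_mul u).const_mul c)).hasDerivWithinAt.congr_deriv (by ring)
  have hbound : ∀ u ∈ uIcc t s, ‖I * exp (I * u) * (φ' (exp (I * u)) - c)‖ ≤ B := by
    intro u hu
    rw [norm_mul, norm_mul, Complex.norm_I, Complex.norm_exp_I_mul_ofReal, one_mul, one_mul]
    exact hB u hu
  have hmvt := (convex_uIcc t s).norm_image_sub_le_of_norm_hasDerivWithin_le hderiv hbound
    left_mem_uIcc right_mem_uIcc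
  rw [Real.norm_eq_abs] at hmvt
  calc _ = ‖φ (exp (I * s)) - c * exp (I * s) - (φ (exp (I * t)) - c * exp (I * t))‖ := by
        congr 1; ring
    _ ≤ B * |s - t| := hmvt

theorem norm_div_sub_le_of_forall_norm_le
    (hφ : ∀ θ : ℝ, HasDerivAt (fun t : ℝ => φ (exp (I * t)))
      (I * exp (I * θ) * φ' (exp (I * θ))) θ)
    {c : ℂ} {B s t : ℝ} (hB : ∀ u ∈ uIcc t s, ‖φ' (exp (I * u)) - c‖ ≤ B)
    (hst : |s - t| ≤ π) (hne : exp (I * s) ≠ exp (I * t)) :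
    ‖(φ (exp (I * s)) - φ (exp (I * t))) / (exp (I * s) - exp (I * t)) - c‖ ≤ π / 2 * B := by
  have hD : exp (I * s) - exp (I * t) ≠ 0 := sub_ne_zero.2 hne
  have hB0 : 0 ≤ B := (norm_nonneg _).trans (hB t left_mem_uIcc)
  rw [div_sub' hD, mul_comm _ c, norm_div, div_le_iff₀ (norm_pos_iff.2 hD)]
  calc ‖φ (exp (I * s)) - φ (exp (I * t)) - c * (exp (I * s) - exp (I * t))‖
      ≤ B * |s - t| := norm_sub_sub_mul_le_of_forall_norm_le hφ hB
    _ ≤ B * (π / 2 * ‖exp (I * s) - exp (I * t)‖) :=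
        mul_le_mul_of_nonneg_left (abs_sub_le_norm_exp_I_mul_sub hst) hB0
    _ = π / 2 * B * ‖exp (I * s) - exp (I * t)‖ := by ring

noncomputable def circleDiffQuot (φ φ' : ℂ → ℂ) (p : ℂ × ℂ) : ℂ :=
  if p.1 = p.2 then φ' p.2 else (φ p.1 - φ p.2) / (p.1 - p.2)

theorem circleDiffQuot_self (T : ℂ) : circleDiffQuot φ φ' (T, T) = φ' T := if_pos rfl

theorem circleDiffQuot_of_ne {S T : ℂ} (h : S ≠ T) :
    circleDiffQuot φ φ' (S, T) = (φ S - φ T) / (S - T) := if_neg h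

theorem continuousWithinAt_circleDiffQuot_diag
    (hφ : ∀ θ : ℝ, HasDerivAt (fun t : ℝ => φ (exp (I * t)))
      (I * exp (I * θ) * φ' (exp (I * θ))) θ)
    (hφ' : ContinuousOn φ' (sphere 0 1)) {T₀ : ℂ} (hT₀ : T₀ ∈ sphere (0 : ℂ) 1) :
    ContinuousWithinAt (circleDiffQuot φ φ') (sphere 0 1 ×ˢ sphere 0 1) (T₀, T₀) := by
  obtain ⟨t₀, rfl, -⟩ := exists_exp_I_mul_eq_abs_sub_le hT₀ 0
  have hg : Continuous fun u : ℝ => φ' (exp (I * u)) :=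
    hφ'.comp_continuous (by fun_prop) fun u => by simp [Complex.norm_exp_I_mul_ofReal]
  rw [Metric.continuousWithinAt_iff]
  intro ε hε
  obtain ⟨δ, hδ, hgδ⟩ := Metric.continuous_iff.1 hg t₀ (ε / π) (by positivity)
  set δ' := min δ (π / 2)
  have hangle : ∀ U ∈ sphere (0 : ℂ) 1, dist U (exp (I * t₀)) < 2 / π * δ' →
      ∃ u : ℝ, exp (I * u) = U ∧ u ∈ ball t₀ δ' := by
    intro U hU hdist
    obtain ⟨u, rfl, hu⟩ := exists_exp_I_mul_eq_abs_sub_le hU t₀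
    refine ⟨u, rfl, ?_⟩
    rw [mem_ball, Real.dist_eq]
    calc |u - t₀| ≤ π / 2 * ‖exp (I * u) - exp (I * t₀)‖ := hu
      _ < π / 2 * (2 / π * δ') := by rw [← dist_eq_norm]; gcongr
      _ = δ' := by field_simp
  refine ⟨2 / π * δ', by positivity, ?_⟩
  rintro ⟨S, T⟩ ⟨hS, hT⟩ hdist
  rw [Prod.dist_eq, max_lt_iff] at hdist
  obtain ⟨s, rfl, hs⟩ := hangle S hS hdist.1
  obtain ⟨t, rfl, ht⟩ := hangle T hT hdist.2
  have hclose : ∀ u ∈ uIcc t s, ‖φ' (exp (I * u)) - φ' (exp (I * t₀))‖ ≤ ε / π := fun u hu =>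
    dist_eq_norm (φ' _) _ ▸ (hgδ u (ball_subset_ball (min_le_left _ _)
      ((convex_ball t₀ δ').ordConnected.uIcc_subset ht hs hu))).le
  rw [circleDiffQuot_self]
  by_cases heq : exp (I * s) = exp (I * t)
  · rw [heq, circleDiffQuot_self]
    exact (hgδ t (ball_subset_ball (min_le_left _ _) ht)).trans
      (div_lt_self hε (by linarith [Real.pi_gt_three]))
  · have hst : |s - t| ≤ π := by
      rw [mem_ball, Real.dist_eq, abs_sub_lt_iff] at hs ht
      have : δ' ≤ π / 2 := min_le_right _ _
      exact abs_le.2 ⟨by linarith, by linarith⟩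
    rw [circleDiffQuot_of_ne heq, dist_eq_norm]
    calc _ ≤ π / 2 * (ε / π) := norm_div_sub_le_of_forall_norm_le hφ hclose hst heq
      _ = ε / 2 := by field_simp
      _ < ε := half_lt_self hε

theorem continuousWithinAt_circleDiffQuot_of_ne (hφ : ContinuousOn φ (sphere 0 1))
    {S₀ T₀ : ℂ} (hS₀ : S₀ ∈ sphere (0 : ℂ) 1) (hT₀ : T₀ ∈ sphere (0 : ℂ) 1) (hne : S₀ ≠ T₀) :
    ContinuousWithinAt (circleDiffQuot φ φ') (sphere 0 1 ×ˢ sphere 0 1) (S₀, T₀) := by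
  have hquot : ContinuousWithinAt (fun p : ℂ × ℂ => (φ p.1 - φ p.2) / (p.1 - p.2))
      (sphere 0 1 ×ˢ sphere 0 1) (S₀, T₀) :=
    (((hφ S₀ hS₀).comp continuousWithinAt_fst fun _ hp => hp.1).sub
      ((hφ T₀ hT₀).comp continuousWithinAt_snd fun _ hp => hp.2)).div
      (continuousWithinAt_fst.sub continuousWithinAt_snd) (sub_ne_zero.2 hne)
  have hoff : ∀ᶠ p in 𝓝 (S₀, T₀), p.1 ≠ p.2 :=
    isClosed_diagonal.isOpen_compl.mem_nhds hne
  exact hquot.congr_of_eventuallyEq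
    (eventually_nhdsWithin_of_eventually_nhds (hoff.mono fun _ hp => circleDiffQuot_of_ne hp))
    (circleDiffQuot_of_ne hne)

theorem continuousOn_circleDiffQuot
    (hφ : ∀ θ : ℝ, HasDerivAt (fun t : ℝ => φ (exp (I * t)))
      (I * exp (I * θ) * φ' (exp (I * θ))) θ)
    (hφc : ContinuousOn φ (sphere 0 1)) (hφ' : ContinuousOn φ' (sphere 0 1)) :
    ContinuousOn (circleDiffQuot φ φ') (sphere 0 1 ×ˢ sphere 0 1) := by
  rintro ⟨S, T⟩ ⟨hS, hT⟩
  obtain rfl | hne := eq_or_ne S T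
  · exact continuousWithinAt_circleDiffQuot_diag hφ hφ' hT
  · exact continuousWithinAt_circleDiffQuot_of_ne hφc hS hT hne

theorem circleDiffQuot_ne_zero (hinj : InjOn φ (sphere 0 1))
    (hφ' : ∀ T ∈ sphere (0 : ℂ) 1, φ' T ≠ 0) {p : ℂ × ℂ} (hp : p ∈ sphere 0 1 ×ˢ sphere 0 1) :
    circleDiffQuot φ φ' p ≠ 0 := by
  obtain ⟨S, T⟩ := p
  obtain ⟨hS, hT⟩ := hp
  obtain rfl | hne := eq_or_ne S T
  · rw [circleDiffQuot_self]
    exact hφ' S hT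
  · rw [circleDiffQuot_of_ne hne]
    exact div_ne_zero (sub_ne_zero.2 (hinj.ne hS hT hne)) (sub_ne_zero.2 hne)

end ContourDerivative

theorem IsCompact.exists_pos_le_norm_le {X E : Type*} [TopologicalSpace X] [NormedAddCommGroup E]
    {f : X → E} {K : Set X} (hK : IsCompact K) (hne : K.Nonempty) (hf : ContinuousOn f K)
    (hf0 : ∀ x ∈ K, f x ≠ 0) :
    ∃ c₁ c₂ : ℝ, 0 < c₁ ∧ c₁ ≤ c₂ ∧ ∀ x ∈ K, c₁ ≤ ‖f x‖ ∧ ‖f x‖ ≤ c₂ := by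
  obtain ⟨x₁, hx₁, hmin⟩ := hK.exists_isMinOn hne hf.norm
  obtain ⟨x₂, hx₂, hmax⟩ := hK.exists_isMaxOn hne hf.norm
  exact ⟨‖f x₁‖, ‖f x₂‖, norm_pos_iff.2 (hf0 x₁ hx₁), hmin hx₂, fun x hx => ⟨hmin hx, hmax hx⟩⟩

theorem difference_quotient_bounded (C : ConformalMap) :
    ∃ c₁ c₂ : ℝ, 0 < c₁ ∧ c₁ ≤ c₂ ∧
      ∀ S ∈ sphere (0 : ℂ) 1, ∀ T ∈ sphere (0 : ℂ) 1, S ≠ T →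
        c₁ ≤ ‖(C.σ S - C.σ T) / (S - T)‖ ∧
          ‖(C.σ S - C.σ T) / (S - T)‖ ≤ c₂ := by
  have hK : IsCompact (sphere (0 : ℂ) 1 ×ˢ sphere (0 : ℂ) 1) :=
    (isCompact_sphere 0 1).prod (isCompact_sphere 0 1)
  have hKne : (sphere (0 : ℂ) 1 ×ˢ sphere (0 : ℂ) 1).Nonempty := ⟨(1, 1), by simp, by simp⟩
  have hcont := continuousOn_circleDiffQuot C.hasDeriv (C.contOn.mono sphere_subset_closedBall)
    C.cont_deriv
  have hne_zero : ∀ p ∈ sphere (0 : ℂ) 1 ×ˢ sphere (0 : ℂ) 1, circleDiffQuot C.σ C.σ' p ≠ 0 :=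
    fun _ => circleDiffQuot_ne_zero (C.injOn.mono sphere_subset_closedBall) C.deriv_ne_zero
  obtain ⟨c₁, c₂, hc₁, hc₁₂, hbounds⟩ := hK.exists_pos_le_norm_le hKne hcont hne_zero
  refine ⟨c₁, c₂, hc₁, hc₁₂, fun S hS T hT hST => ?_⟩
  rw [← circleDiffQuot_of_ne hST]
  exact hbounds (S, T) ⟨hS, hT⟩
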